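/- arXiv:math/9908084 — 5 statements merged into one kernel-verified Lean document; each statement's English description precedes it below -/
import Mathlib

section
/- Let S be a separable metric space, ρ a Borel probability law on S, and for each n let ρ_n be a symmetric Borel probability law on S^n. If for every pair of bounded continuous functions φ₁, φ₂ on S the integral of φ₁(s₁)φ₂(s₂) against ρ_n converges to (∫φ₁ dρ)(∫φ₂ dρ) as n → ∞, then for every k and every choice of bounded continuous functions φ₁,…,φ_k on S, the integral of φ₁(s₁)⋯φ_k(s_k) against ρ_n converges to ∏_{i=1}^k ∫φ_i dρ. -/
open MeasureTheory Filter Topology BoundedContinuousFunction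
open scoped ENNReal NNReal
noncomputable section
variable {S : Type*}

instance secondCountable_of_sep [PseudoMetricSpace S] [TopologicalSpace.SeparableSpace S] :
    SecondCountableTopology S := UniformSpace.secondCountable_of_separable S

instance [MeasurableSpace S] : MeasurableSpace (ProbabilityMeasure S) :=
  Subtype.instMeasurableSpace

def empMeasure [MeasurableSpace S] {n : ℕ} (s : Fin n → S) : Measure S :=
  (n : ℝ≥0∞)⁻¹ • ∑ i : Fin n, Measure.dirac (s i)

instance [MeasurableSpace S] {n : ℕ} [NeZero n] (s : Fin n → S) :
    IsProbabilityMeasure (empMeasure s) := by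
  constructor
  simp only [empMeasure, Measure.smul_apply, Measure.finset_sum_apply, measure_univ,
    Finset.sum_const, Finset.card_univ, Fintype.card_fin, smul_eq_mul, nsmul_eq_mul, mul_one]
  exact ENNReal.inv_mul_cancel (by exact_mod_cast NeZero.ne n) (by simp)

def empirical [MeasurableSpace S] {n : ℕ} [NeZero n] (s : Fin n → S) :
    ProbabilityMeasure S := ⟨empMeasure s, inferInstance⟩

def IsSymmetric [MeasurableSpace S] {n : ℕ} (ρ : Measure (Fin n → S)) : Prop :=
  ∀ π : Equiv.Perm (Fin n), ρ.map (fun s i => s (π i)) = ρ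

def IsChaotic [MeasurableSpace S] [TopologicalSpace S]
    (ρs : ∀ n, Measure (Fin n → S)) (p : Measure S) : Prop :=
  ∀ (k : ℕ) (φ : Fin k → (S →ᵇ ℝ)),
    Tendsto (fun n => ∫ s, ∏ i : Fin k, (if h : (i : ℕ) < n then φ i (s ⟨i, h⟩) else 1) ∂ ρs n)
      atTop (𝓝 (∏ i : Fin k, ∫ x, φ i x ∂ p))

def symmetrize [MeasurableSpace S] {n : ℕ} (ρ : Measure (Fin n → S)) : Measure (Fin n → S) :=
  ((Nat.factorial n : ℝ≥0∞))⁻¹ • ∑ π : Equiv.Perm (Fin n), ρ.map (fun s i => s (π i))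

def WeakTendsto {X : Type*} [MeasurableSpace X] [TopologicalSpace X]
    (μ : ℕ → Measure X) (ν : Measure X) : Prop :=
  ∀ φ : X →ᵇ ℝ, Tendsto (fun n => ∫ x, φ x ∂ μ n) atTop (𝓝 (∫ x, φ x ∂ ν))

def marginal [MeasurableSpace S] {k n : ℕ} (h : k ≤ n) (ρ : Measure (Fin n → S)) :
    Measure (Fin k → S) := ρ.map (fun s i => s (Fin.castLE h i))

/-!
For a symmetric law `μ` on `S^n` and `k ≤ n`, expanding `∏ᵢ ∫ φᵢ d(empMeasure s)` as an average
over all maps `Fin k → Fin n` shows that `E[∏ᵢ ⟨φᵢ, μ̂⟩]` differs from `E[∏ᵢ φᵢ(sᵢ)]` by at most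
`2 ∏ᵢ ‖φᵢ‖ (1 - n(n-1)⋯(n-k+1)/nᵏ)`: by symmetry every injective map contributes the
`k`-marginal, and the non-injective maps are a vanishing fraction. With `k = 2` and
`φ₁ = φ₂ = ψ - ∫ ψ dρ`, the hypothesis then gives `E[(⟨ψ, μ̂⟩ - ∫ ψ dρ)²] → 0`, so each
`⟨φᵢ, μ̂⟩` converges in `L¹` to the constant `∫ φᵢ dρ`; a product of uniformly bounded factors
converging in `L¹` converges in `L¹`, and the first estimate transfers this to `E[∏ᵢ φᵢ(sᵢ)]`.
-/

theorem abs_prod_sub_prod_le {ι : Type*} [DecidableEq ι] (s : Finset ι) {f g M : ι → ℝ}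
    (hf : ∀ i ∈ s, |f i| ≤ M i) (hg : ∀ i ∈ s, |g i| ≤ M i) :
    |∏ i ∈ s, f i - ∏ i ∈ s, g i| ≤ ∑ i ∈ s, (∏ l ∈ s.erase i, M l) * |f i - g i| := by
  induction s using Finset.cons_induction with
  | empty => simp
  | cons a t ha ih =>
    simp only [Finset.forall_mem_cons] at hf hg
    have hft : |∏ i ∈ t, f i| ≤ ∏ l ∈ t, M l := by
      rw [Finset.abs_prod]
      exact Finset.prod_le_prod (fun i _ => abs_nonneg _) hf.2
    have herase : ∀ i ∈ t, ∏ l ∈ (Finset.cons a t ha).erase i, M l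
        = M a * ∏ l ∈ t.erase i, M l := fun i hi => by
      rw [Finset.erase_cons_of_ne ha (ne_of_mem_of_not_mem hi ha).symm, Finset.prod_cons]
    rw [Finset.prod_cons, Finset.prod_cons, Finset.sum_cons, Finset.erase_cons]
    calc |f a * ∏ i ∈ t, f i - g a * ∏ i ∈ t, g i|
        = |(f a - g a) * ∏ i ∈ t, f i + g a * (∏ i ∈ t, f i - ∏ i ∈ t, g i)| := by ring_nf
      _ ≤ |f a - g a| * ∏ l ∈ t, M l + M a * ∑ i ∈ t, (∏ l ∈ t.erase i, M l) * |f i - g i| := by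
        refine (abs_add_le _ _).trans (add_le_add ?_ ?_) <;> rw [abs_mul]
        · exact mul_le_mul_of_nonneg_left hft (abs_nonneg _)
        · exact mul_le_mul hg.1 (ih hf.2 hg.2) (abs_nonneg _) ((abs_nonneg _).trans hg.1)
      _ = _ := by
        rw [Finset.mul_sum, mul_comm]
        exact congrArg _ (Finset.sum_congr rfl fun i hi => by rw [herase i hi, mul_assoc])

theorem sq_integral_abs_le_integral_sq {Ω : Type*} [MeasurableSpace Ω] {μ : Measure Ω}
    [IsProbabilityMeasure μ] {X : Ω → ℝ} (hX : MemLp X 2 μ) :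
    (∫ ω, |X ω| ∂μ) ^ 2 ≤ ∫ ω, X ω ^ 2 ∂μ := by
  have := ProbabilityTheory.variance_eq_sub hX.abs ▸ ProbabilityTheory.variance_nonneg |X| μ
  simpa [sq_abs] using this

section SequenceOfSpaces

variable {ι : Type*} {l : Filter ι} {Ω : ι → Type*} [∀ n, MeasurableSpace (Ω n)]
  {μ : ∀ n, Measure (Ω n)} [∀ n, IsProbabilityMeasure (μ n)]

theorem tendsto_integral_abs_of_tendsto_integral_sq {X : ∀ n, Ω n → ℝ}
    (hX : ∀ n, MemLp (X n) 2 (μ n)) (h : Tendsto (fun n => ∫ ω, X n ω ^ 2 ∂μ n) l (𝓝 0)) :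
    Tendsto (fun n => ∫ ω, |X n ω| ∂μ n) l (𝓝 0) := by
  refine squeeze_zero (fun n => integral_nonneg fun _ => abs_nonneg _) (fun n => ?_)
    (by simpa using h.sqrt)
  exact (le_abs_self _).trans (Real.abs_le_sqrt (sq_integral_abs_le_integral_sq (hX n)))

theorem tendsto_integral_prod_of_tendsto_integral_abs_sub {κ : Type*} [Fintype κ]
    {Y : ∀ n, κ → Ω n → ℝ} {m C : κ → ℝ} (hYm : ∀ n i, AEStronglyMeasurable (Y n i) (μ n))
    (hY : ∀ n i ω, |Y n i ω| ≤ C i) (hm : ∀ i, |m i| ≤ C i)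
    (h : ∀ i, Tendsto (fun n => ∫ ω, |Y n i ω - m i| ∂μ n) l (𝓝 0)) :
    Tendsto (fun n => ∫ ω, ∏ i, Y n i ω ∂μ n) l (𝓝 (∏ i, m i)) := by
  classical
  have hint : ∀ n i, Integrable (fun ω => |Y n i ω - m i|) (μ n) := fun n i =>
    (Integrable.of_bound ((hYm n i).sub aestronglyMeasurable_const) (C i + C i)
      (ae_of_all _ fun ω => (abs_sub _ _).trans (add_le_add (hY n i ω) (hm i)))).abs
  have hbound : ∀ n, |∫ ω, ∏ i, Y n i ω ∂μ n - ∏ i, m i|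
      ≤ ∑ i, (∏ j ∈ Finset.univ.erase i, C j) * ∫ ω, |Y n i ω - m i| ∂μ n := fun n => by
    have hprod : Integrable (fun ω => ∏ i, Y n i ω) (μ n) :=
      Integrable.of_bound (Finset.aestronglyMeasurable_fun_prod _ fun i _ => hYm n i)
        (∏ i, C i) (ae_of_all _ fun ω => by
          rw [Real.norm_eq_abs, Finset.abs_prod]
          exact Finset.prod_le_prod (fun i _ => abs_nonneg _) fun i _ => hY n i ω)
    calc |∫ ω, ∏ i, Y n i ω ∂μ n - ∏ i, m i|
        = |∫ ω, (∏ i, Y n i ω - ∏ i, m i) ∂μ n| := by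
          rw [integral_sub hprod (integrable_const _), integral_const, probReal_univ, one_smul]
      _ ≤ ∫ ω, |∏ i, Y n i ω - ∏ i, m i| ∂μ n := abs_integral_le_integral_abs
      _ ≤ ∫ ω, ∑ i, (∏ j ∈ Finset.univ.erase i, C j) * |Y n i ω - m i| ∂μ n :=
          integral_mono (hprod.sub (integrable_const _)).abs
            (integrable_finsetSum _ fun i _ => (hint n i).const_mul _)
            fun ω => abs_prod_sub_prod_le _ (fun i _ => hY n i ω) fun i _ => hm i
      _ = _ := by
          rw [integral_finsetSum _ fun i _ => (hint n i).const_mul _]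
          simp only [integral_const_mul]
  have hlim : Tendsto (fun n => ∑ i, (∏ j ∈ Finset.univ.erase i, C j) * ∫ ω, |Y n i ω - m i| ∂μ n)
      l (𝓝 0) := by
    simpa using tendsto_finsetSum _ fun i _ => (h i).const_mul (∏ j ∈ Finset.univ.erase i, C j)
  rw [tendsto_iff_norm_sub_tendsto_zero]
  exact squeeze_zero (fun _ => norm_nonneg _) hbound hlim

end SequenceOfSpaces

open Finset in
theorem card_filter_not_injective (k n : ℕ) :
    #{g : Fin k → Fin n | ¬Function.Injective g} = n ^ k - n.descFactorial k := by
  have hinj : #{g : Fin k → Fin n | Function.Injective g} = n.descFactorial k := by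
    rw [← Fintype.card_subtype, Fintype.card_congr (Equiv.subtypeInjectiveEquivEmbedding _ _),
      Fintype.card_embedding_eq, Fintype.card_fin, Fintype.card_fin]
  have := Finset.card_filter_add_card_filter_not (s := Finset.univ)
    (fun g : Fin k → Fin n => Function.Injective g)
  rw [hinj, Finset.card_univ, Fintype.card_fun, Fintype.card_fin, Fintype.card_fin] at this
  omega

theorem tendsto_one_sub_descFactorial_div_pow (k : ℕ) :
    Tendsto (fun n : ℕ => 1 - (n.descFactorial k : ℝ) / n ^ k) atTop (𝓝 0) := by
  have hne : ∀ᶠ n : ℕ in atTop, ((n : ℝ) ^ k) ≠ 0 :=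
    eventually_atTop.mpr ⟨1, fun n hn => pow_ne_zero _ (by positivity)⟩
  have := (Asymptotics.isEquivalent_iff_tendsto_one hne).mp (isEquivalent_descFactorial k)
  simpa using (tendsto_const_nhds (x := (1 : ℝ))).sub this

section Empirical

variable [TopologicalSpace S] [MeasurableSpace S] [OpensMeasurableSpace S] {n : ℕ}

theorem integral_empMeasure (φ : S →ᵇ ℝ) (s : Fin n → S) :
    ∫ x, φ x ∂empMeasure s = (n : ℝ)⁻¹ * ∑ j, φ (s j) := by
  rw [empMeasure, integral_smul_measure, integral_finsetSum_measure fun j _ => φ.integrable _]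
  simp [integral_dirac' _ _ φ.continuous.stronglyMeasurable]

theorem measurable_integral_empMeasure (φ : S →ᵇ ℝ) :
    Measurable fun s : Fin n → S => ∫ x, φ x ∂empMeasure s := by
  simp only [integral_empMeasure]
  exact (Finset.measurable_sum _ fun j _ =>
    φ.continuous.measurable.comp (measurable_pi_apply j)).const_mul _

theorem abs_integral_empMeasure_le (φ : S →ᵇ ℝ) (s : Fin n → S) :
    |∫ x, φ x ∂empMeasure s| ≤ ‖φ‖ := by
  rcases eq_or_ne n 0 with rfl | hn
  · simp [empMeasure]
  · have : NeZero n := ⟨hn⟩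
    exact φ.norm_integral_le_norm _

theorem prod_integral_empMeasure {k : ℕ} (φ : Fin k → S →ᵇ ℝ) (s : Fin n → S) :
    ∏ i, ∫ x, φ i x ∂empMeasure s = ((n : ℝ) ^ k)⁻¹ * ∑ g : Fin k → Fin n, ∏ i, φ i (s (g i)) := by
  simp only [integral_empMeasure, Finset.prod_mul_distrib, Finset.prod_const, Finset.card_univ,
    Fintype.card_fin, inv_pow, Fintype.prod_sum]

end Empirical

theorem abs_prod_apply_le [TopologicalSpace S] {κ : Type*} [Fintype κ] (φ : κ → S →ᵇ ℝ)
    (x : κ → S) : |∏ i, φ i (x i)| ≤ ∏ i, ‖φ i‖ := by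
  rw [Finset.abs_prod]
  exact Finset.prod_le_prod (fun i _ => abs_nonneg _) fun i _ => (φ i).norm_coe_le_norm _

section Symmetric

variable [MeasurableSpace S] {k n : ℕ}

theorem IsSymmetric.map_comp_eq {μ : Measure (Fin n → S)} (hμ : IsSymmetric μ)
    {g g' : Fin k → Fin n} (hg : Function.Injective g) (hg' : Function.Injective g') :
    μ.map (fun s => s ∘ g) = μ.map (fun s => s ∘ g') := by
  obtain ⟨σ, hσ⟩ := Equiv.Perm.exists_extending_pair g' g hg' hg
  have hcomp : (fun s : Fin n → S => s ∘ g) = (fun s => s ∘ g') ∘ fun s i => s (σ i) := by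
    ext s i; simp [hσ]
  rw [hcomp, ← Measure.map_map (by fun_prop) (by fun_prop), hμ σ]

theorem IsSymmetric.integral_comp_eq {μ : Measure (Fin n → S)} (hμ : IsSymmetric μ)
    {g g' : Fin k → Fin n} (hg : Function.Injective g) (hg' : Function.Injective g')
    {f : (Fin k → S) → ℝ} (hf : Measurable f) :
    ∫ s, f (s ∘ g) ∂μ = ∫ s, f (s ∘ g') ∂μ := by
  have hm : ∀ g : Fin k → Fin n, Measurable fun s : Fin n → S => s ∘ g := fun g => by fun_prop
  rw [← integral_map (hm g).aemeasurable hf.aestronglyMeasurable,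
    ← integral_map (hm g').aemeasurable hf.aestronglyMeasurable, hμ.map_comp_eq hg hg']

variable [TopologicalSpace S] [OpensMeasurableSpace S]

open Finset in
theorem IsSymmetric.abs_integral_prod_empMeasure_sub_le {μ : Measure (Fin n → S)}
    [IsProbabilityMeasure μ] (hμ : IsSymmetric μ) (hkn : k ≤ n) (φ : Fin k → S →ᵇ ℝ) :
    |∫ s, ∏ i, ∫ x, φ i x ∂empMeasure s ∂μ - ∫ s, ∏ i, φ i (s (Fin.castLE hkn i)) ∂μ|
      ≤ 2 * (∏ i, ‖φ i‖) * (1 - (n.descFactorial k : ℝ) / n ^ k) := by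
  classical
  set B := ∏ i, ‖φ i‖
  set T : (Fin k → Fin n) → ℝ := fun g => ∫ s, ∏ i, φ i (s (g i)) ∂μ
  set A := T (Fin.castLE hkn)
  have hN : ((n : ℝ) ^ k) ≠ 0 := by
    rcases n.eq_zero_or_pos with rfl | hn
    · simp [Nat.le_zero.mp hkn]
    · positivity
  have hmeas : Measurable fun x : Fin k → S => ∏ i, φ i (x i) := by fun_prop
  have hbound : ∀ (g : Fin k → Fin n) (s : Fin n → S), ‖∏ i, φ i (s (g i))‖ ≤ B := fun g s => by
    rw [Real.norm_eq_abs]; exact abs_prod_apply_le φ (s ∘ g)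
  have hTinj : ∀ g, Function.Injective g → T g = A := fun g hg =>
    hμ.integral_comp_eq hg (Fin.castLE_injective hkn) hmeas
  have hT : ∀ g, |T g - A| ≤ 2 * B := by
    have hle : ∀ g, |T g| ≤ B := fun g => by
      simpa using norm_integral_le_of_norm_le_const (μ := μ) (ae_of_all _ (hbound g))
    exact fun g => (abs_sub _ _).trans (by linarith [hle g, hle (Fin.castLE hkn)])
  have hsum : ∑ g with ¬Function.Injective g, (T g - A) = ∑ g, (T g - A) :=
    Finset.sum_filter_of_ne fun g _ h hg => h (by simp only [hTinj g hg, sub_self])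
  have hexp : ∫ s, ∏ i, ∫ x, φ i x ∂empMeasure s ∂μ - A
      = ((n : ℝ) ^ k)⁻¹ * ∑ g with ¬Function.Injective g, (T g - A) := by
    rw [hsum, Finset.sum_sub_distrib, Finset.sum_const, Finset.card_univ, Fintype.card_fun,
      Fintype.card_fin, Fintype.card_fin, nsmul_eq_mul]
    simp_rw [prod_integral_empMeasure]
    have hint : ∀ g : Fin k → Fin n, Integrable (fun s : Fin n → S => ∏ i, φ i (s (g i))) μ :=
      fun g => .of_bound (hmeas.comp (by fun_prop)).aestronglyMeasurable B
        (ae_of_all _ (hbound g))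
    rw [integral_const_mul, integral_finsetSum _ fun g _ => hint g]
    push_cast
    field_simp
    rfl
  rw [hexp, abs_mul, abs_inv, abs_of_pos (by positivity)]
  calc ((n : ℝ) ^ k)⁻¹ * |∑ g with ¬Function.Injective g, (T g - A)|
      ≤ ((n : ℝ) ^ k)⁻¹ * (#{g : Fin k → Fin n | ¬Function.Injective g} • (2 * B)) := by
        gcongr
        exact (Finset.abs_sum_le_sum_abs _ _).trans (Finset.sum_le_card_nsmul _ _ _ fun g _ => hT g)
    _ = 2 * B * (1 - (n.descFactorial k : ℝ) / n ^ k) := by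
        rw [card_filter_not_injective, nsmul_eq_mul, Nat.cast_sub (Nat.descFactorial_le_pow n k)]
        push_cast
        field_simp

end Symmetric

section Chaos

variable [TopologicalSpace S] [MeasurableSpace S] [OpensMeasurableSpace S]
  {μ : ∀ n, Measure (Fin n → S)} [∀ n, IsProbabilityMeasure (μ n)]

theorem tendsto_integral_prod_empMeasure_sub (hμ : ∀ n, IsSymmetric (μ n)) {k : ℕ}
    (φ : Fin k → S →ᵇ ℝ) :
    Tendsto (fun n => ∫ s, ∏ i, ∫ x, φ i x ∂empMeasure s ∂μ n
      - ∫ s, ∏ i : Fin k, (if h : (i : ℕ) < n then φ i (s ⟨i, h⟩) else 1) ∂μ n) atTop (𝓝 0) := by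
  refine squeeze_zero_norm' ?_
    (by simpa using (tendsto_one_sub_descFactorial_div_pow k).const_mul (2 * ∏ i, ‖φ i‖))
  filter_upwards [eventually_ge_atTop k] with n hkn
  have hfirst : (fun s : Fin n → S => ∏ i : Fin k, if h : (i : ℕ) < n then φ i (s ⟨i, h⟩) else 1)
      = fun s => ∏ i, φ i (s (Fin.castLE hkn i)) :=
    funext fun s => Finset.prod_congr rfl fun i _ => dif_pos (i.isLt.trans_le hkn)
  rw [Real.norm_eq_abs, hfirst]
  exact (hμ n).abs_integral_prod_empMeasure_sub_le hkn φ

theorem tendsto_integral_mul_empMeasure (hμ : ∀ n, IsSymmetric (μ n)) {φ₁ φ₂ : S →ᵇ ℝ} {c : ℝ}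
    (h2 : Tendsto (fun n => ∫ s, (if h : 0 < n then φ₁ (s ⟨0, h⟩) else 1) *
      (if h : 1 < n then φ₂ (s ⟨1, h⟩) else 1) ∂μ n) atTop (𝓝 c)) :
    Tendsto (fun n => ∫ s, (∫ x, φ₁ x ∂empMeasure s) * ∫ x, φ₂ x ∂empMeasure s ∂μ n)
      atTop (𝓝 c) := by
  have := (tendsto_integral_prod_empMeasure_sub hμ ![φ₁, φ₂]).add h2
  simpa [Fin.prod_univ_two] using this

theorem tendsto_integral_abs_integral_empMeasure_sub (hμ : ∀ n, IsSymmetric (μ n))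
    {p : Measure S} [IsProbabilityMeasure p]
    (h2 : ∀ φ₁ φ₂ : S →ᵇ ℝ, Tendsto (fun n => ∫ s, (if h : 0 < n then φ₁ (s ⟨0, h⟩) else 1) *
      (if h : 1 < n then φ₂ (s ⟨1, h⟩) else 1) ∂μ n) atTop (𝓝 ((∫ x, φ₁ x ∂p) * ∫ x, φ₂ x ∂p)))
    (ψ : S →ᵇ ℝ) :
    Tendsto (fun n => ∫ s, |∫ x, ψ x ∂empMeasure s - ∫ x, ψ x ∂p| ∂μ n) atTop (𝓝 0) := by
  set m := ∫ x, ψ x ∂p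
  set χ := ψ - BoundedContinuousFunction.const S m
  have hχ : ∀ n, n ≠ 0 → ∀ s : Fin n → S, ∫ x, χ x ∂empMeasure s = ∫ x, ψ x ∂empMeasure s - m := by
    intro n hn s
    have : NeZero n := ⟨hn⟩
    simp [χ, integral_sub (ψ.integrable _) (integrable_const m)]
  have hχp : ∫ x, χ x ∂p = 0 := by
    simp [χ, m, integral_sub (ψ.integrable _) (integrable_const m)]
  have hsq : Tendsto (fun n => ∫ s, (∫ x, χ x ∂empMeasure s) ^ 2 ∂μ n) atTop (𝓝 0) := by
    simpa [sq, hχp] using tendsto_integral_mul_empMeasure hμ (h2 χ χ)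
  refine (tendsto_integral_abs_of_tendsto_integral_sq (fun n => ?_) hsq).congr' ?_
  · exact .of_bound (measurable_integral_empMeasure χ).aestronglyMeasurable ‖χ‖
      (ae_of_all _ fun s => by simpa using abs_integral_empMeasure_le χ s)
  · filter_upwards [eventually_ne_atTop 0] with n hn
    simp only [hχ n hn]

end Chaos

theorem stmt_0_general {S : Type*} [MetricSpace S] [MeasurableSpace S] [BorelSpace S]
    (ρ : ProbabilityMeasure S) (ρs : ∀ n, ProbabilityMeasure (Fin n → S))
    (hsym : ∀ n, IsSymmetric (ρs n : Measure (Fin n → S)))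
    (h2 : ∀ φ₁ φ₂ : S →ᵇ ℝ,
      Tendsto (fun n => ∫ s, (if h : 0 < n then φ₁ (s ⟨0, h⟩) else 1) *
          (if h : 1 < n then φ₂ (s ⟨1, h⟩) else 1) ∂ (ρs n : Measure (Fin n → S)))
        atTop (𝓝 ((∫ x, φ₁ x ∂ (ρ : Measure S)) * (∫ x, φ₂ x ∂ (ρ : Measure S))))) :
    IsChaotic (fun n => (ρs n : Measure (Fin n → S))) (ρ : Measure S) := by
  intro k φ
  have hprod : Tendsto (fun n => ∫ s, ∏ i, ∫ x, φ i x ∂empMeasure s ∂(ρs n : Measure (Fin n → S)))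
      atTop (𝓝 (∏ i, ∫ x, φ i x ∂(ρ : Measure S))) :=
    tendsto_integral_prod_of_tendsto_integral_abs_sub
      (fun n i => (measurable_integral_empMeasure (φ i)).aestronglyMeasurable)
      (fun n i s => abs_integral_empMeasure_le (φ i) s)
      (fun i => by simpa using (φ i).norm_integral_le_norm (ρ : Measure S))
      (fun i => tendsto_integral_abs_integral_empMeasure_sub hsym h2 (φ i))
  simpa using hprod.sub (tendsto_integral_prod_empMeasure_sub hsym φ)

/-- Sznitman–Tanaka (ii) ⟹ (i): convergence of two-particle correlations implies
Kac chaoticity. -/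
theorem stmt_0 {S : Type*} [MetricSpace S] [TopologicalSpace.SeparableSpace S]
    [MeasurableSpace S] [BorelSpace S]
    (ρ : ProbabilityMeasure S) (ρs : ∀ n, ProbabilityMeasure (Fin n → S))
    (hsym : ∀ n, IsSymmetric (ρs n : Measure (Fin n → S)))
    (h2 : ∀ φ₁ φ₂ : S →ᵇ ℝ,
      Tendsto (fun n => ∫ s, (if h : 0 < n then φ₁ (s ⟨0, h⟩) else 1) *
          (if h : 1 < n then φ₂ (s ⟨1, h⟩) else 1) ∂ (ρs n : Measure (Fin n → S)))
        atTop (𝓝 ((∫ x, φ₁ x ∂ (ρ : Measure S)) * (∫ x, φ₂ x ∂ (ρ : Measure S))))) :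
    IsChaotic (fun n => (ρs n : Measure (Fin n → S))) (ρ : Measure S) :=
  stmt_0_general ρ ρs hsym h2
end
end

section
/- For a product law: if ρ ∈ P(S) with S a separable metric space, then the sequence of product laws {ρ^{⊗n}} is ρ-chaotic; equivalently, the empirical measures of n i.i.d. ρ-distributed samples converge in law to the constant ρ (the pushforwards ρ^{⊗n} ∘ ε_n^{-1} converge weakly to δ(ρ) in P(P(S))). -/
open MeasureTheory Filter Topology BoundedContinuousFunction
open scoped ENNReal NNReal
noncomputable section
variable {S : Type*}

/-! For `n ≥ k` the first `k` coordinates of `ρ^{⊗n}` are exactly `ρ^{⊗k}`, so the chaos integrals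
are eventually constant and equal to the product of the one-dimensional integrals.

For the empirical measures, Chebyshev's inequality with `Var[(1/n) ∑ g(sᵢ)] = Var[g]/n` gives the
weak law of large numbers `∫ g dεₙ → ∫ g dρ` in probability for each bounded `g`. Since the weak
topology is the coarsest one making all these integrals continuous, `εₙ → ρ` in probability in
`P(S)`, and convergence in probability to a constant implies convergence in law. -/

open MeasureTheory Filter Topology ProbabilityTheory

section Chaos

variable [MeasurableSpace S]

theorem integral_prod_comp_castLE_pi (ρ : Measure S) [IsProbabilityMeasure ρ] {k n : ℕ}
    (hkn : k ≤ n) (φ : Fin k → S → ℝ) :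
    ∫ s, ∏ i, φ i (s (Fin.castLE hkn i)) ∂(Measure.pi fun _ : Fin n => ρ) =
      ∏ i, ∫ x, φ i x ∂ρ := by
  obtain ⟨m, rfl⟩ := Nat.exists_eq_add_of_le hkn
  have := integral_fintype_prod_eq_prod (Fin.append φ fun (_ : Fin m) _ => 1) (μ := fun _ => ρ)
  simp only [Fin.prod_univ_add, Fin.append_left, Fin.append_right, integral_const, probReal_univ,
    smul_eq_mul, mul_one, Finset.prod_const_one] at this
  exact this

theorem isChaotic_pi (ρ : Measure S) [IsProbabilityMeasure ρ] [TopologicalSpace S] :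
    IsChaotic (fun n => Measure.pi fun _ : Fin n => ρ) ρ := by
  intro k φ
  refine tendsto_const_nhds.congr' ?_
  filter_upwards [eventually_ge_atTop k] with n hkn
  rw [← integral_prod_comp_castLE_pi ρ hkn]
  refine integral_congr_ae (ae_of_all _ fun s => Finset.prod_congr rfl fun i _ => ?_)
  rw [dif_pos (i.isLt.trans_le hkn)]
  rfl

end Chaos

section Empirical

variable [MeasurableSpace S]

theorem integral_empirical {n : ℕ} [NeZero n] (s : Fin n → S) {f : S → ℝ}
    (hf : StronglyMeasurable f) :
    ∫ x, f x ∂(empirical s : Measure S) = (∑ i, f (s i)) / n := by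
  change ∫ x, f x ∂empMeasure s = _
  rw [empMeasure, integral_smul_measure,
    integral_finsetSum_measure fun i _ => integrable_dirac' hf enorm_lt_top]
  simp_rw [integral_dirac' f _ hf]
  simp [div_eq_inv_mul]

theorem continuous_empirical [TopologicalSpace S] [OpensMeasurableSpace S] {n : ℕ} [NeZero n] :
    Continuous fun s : Fin n → S => empirical s := by
  refine ProbabilityMeasure.continuous_iff_forall_continuous_integral.2 fun f => ?_
  simp_rw [integral_empirical _ f.continuous.stronglyMeasurable]
  fun_prop

end Empirical

section InProbability

variable {ι X : Type*} {l : Filter ι} {Ω : ι → Type*} [∀ i, MeasurableSpace (Ω i)]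
  {μ : ∀ i, Measure (Ω i)} {F : ∀ i, Ω i → X}

/-- Sets `U` with `μ i (F i ∉ U) → 0`; `F i → x` in probability means `inProbability l μ F ≤ 𝓝 x`. -/
def inProbability (l : Filter ι) (μ : ∀ i, Measure (Ω i)) (F : ∀ i, Ω i → X) : Filter X where
  sets := {U | Tendsto (fun i => μ i {ω | F i ω ∉ U}) l (𝓝 0)}
  univ_sets := by simpa using tendsto_const_nhds
  sets_of_superset {U V} hU hUV :=
    tendsto_of_tendsto_of_tendsto_of_le_of_le tendsto_const_nhds hU (fun _ => zero_le)
      fun i => measure_mono fun ω hω hωU => hω (hUV hωU)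
  inter_sets {U V} hU hV := by
    refine tendsto_of_tendsto_of_tendsto_of_le_of_le tendsto_const_nhds (by simpa using hU.add hV)
      (fun _ => zero_le) fun i => (measure_mono fun ω hω => ?_).trans (measure_union_le _ _)
    exact not_and_or.1 hω

theorem mem_inProbability {U : Set X} :
    U ∈ inProbability l μ F ↔ Tendsto (fun i => μ i {ω | F i ω ∉ U}) l (𝓝 0) :=
  Iff.rfl

theorem map_inProbability {Y : Type*} (h : X → Y) :
    map h (inProbability l μ F) = inProbability l μ fun i ω => h (F i ω) :=
  rfl

theorem inProbability_le_nhds_iff [PseudoMetricSpace X] {x : X} :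
    inProbability l μ F ≤ 𝓝 x ↔
      ∀ δ > 0, Tendsto (fun i => μ i {ω | δ ≤ dist (F i ω) x}) l (𝓝 0) := by
  simp [Metric.nhds_basis_ball.ge_iff, mem_inProbability]

theorem dist_integral_const_le {Ω E : Type*} [MeasurableSpace Ω] {ν : Measure Ω}
    [IsProbabilityMeasure ν] [NormedAddCommGroup E] [NormedSpace ℝ E] [CompleteSpace E] {f : Ω → E}
    (hf : AEStronglyMeasurable f ν) (c : E) {M ε : ℝ} (hM : ∀ ω, dist (f ω) c ≤ M)
    (hε : 0 ≤ ε) (s : Set Ω) (hs : ∀ ω ∉ s, dist (f ω) c ≤ ε) :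
    dist (∫ ω, f ω ∂ν) c ≤ ε + M * ν.real s := by
  set t := toMeasurable ν s
  have hfi : Integrable f ν := by
    refine Integrable.of_bound hf (M + ‖c‖) (ae_of_all _ fun ω => ?_)
    have := norm_le_norm_add_norm_sub' (f ω) c
    linarith [hM ω, dist_eq_norm (f ω) c]
  have hbound : ∀ ω, ‖f ω - c‖ ≤ ε + t.indicator (fun _ => M) ω := by
    intro ω
    rw [← dist_eq_norm]
    by_cases hω : ω ∈ t
    · simpa [hω] using (hM ω).trans (le_add_of_nonneg_left hε)
    · simpa [hω] using hs ω fun h => hω (subset_toMeasurable ν s h)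
  calc dist (∫ ω, f ω ∂ν) c = ‖∫ ω, (f ω - c) ∂ν‖ := by
        rw [dist_eq_norm, integral_sub hfi (integrable_const c), integral_const, probReal_univ,
          one_smul]
    _ ≤ ∫ ω, (ε + t.indicator (fun _ => M) ω) ∂ν :=
        norm_integral_le_of_norm_le
          ((integrable_const ε).add ((integrable_const M).indicator (measurableSet_toMeasurable ν s)))
          (ae_of_all _ hbound)
    _ = ε + M * ν.real s := by
        rw [integral_add (integrable_const ε)
          ((integrable_const M).indicator (measurableSet_toMeasurable ν s)),
          integral_indicator_const _ (measurableSet_toMeasurable ν s)]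
        simp [measureReal_def, mul_comm]

theorem tendsto_integral_of_inProbability_le_nhds [TopologicalSpace X]
    [∀ i, IsProbabilityMeasure (μ i)] {x : X} (hF : inProbability l μ F ≤ 𝓝 x)
    {E : Type*} [NormedAddCommGroup E] [NormedSpace ℝ E] [CompleteSpace E] (φ : X →ᵇ E)
    (hφF : ∀ i, AEStronglyMeasurable (fun ω => φ (F i ω)) (μ i)) :
    Tendsto (fun i => ∫ ω, φ (F i ω) ∂μ i) l (𝓝 (φ x)) := by
  rw [Metric.tendsto_nhds]
  intro ε hε
  set U := φ ⁻¹' Metric.ball (φ x) (ε / 2)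
  have hU : Tendsto (fun i => (μ i).real {ω | F i ω ∉ U}) l (𝓝 0) :=
    (ENNReal.tendsto_toReal ENNReal.zero_ne_top).comp
      (hF (φ.continuous.continuousAt.preimage_mem_nhds (Metric.ball_mem_nhds _ (half_pos hε))))
  have hsmall : ∀ᶠ i in l, 2 * ‖φ‖ * (μ i).real {ω | F i ω ∉ U} < ε / 2 := by
    have := hU.const_mul (2 * ‖φ‖)
    rw [mul_zero] at this
    exact this.eventually (gt_mem_nhds (half_pos hε))
  filter_upwards [hsmall] with i hi
  calc dist (∫ ω, φ (F i ω) ∂μ i) (φ x)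
      ≤ ε / 2 + 2 * ‖φ‖ * (μ i).real {ω | F i ω ∉ U} :=
        dist_integral_const_le (hφF i) _ (fun ω => φ.dist_le_two_norm _ _) (half_pos hε).le _
          fun ω hω => (Metric.mem_ball.1 (not_not.1 hω)).le
    _ < ε := by linarith

end InProbability

section WeakLaw

variable [MeasurableSpace S] (ρ : Measure S) [IsProbabilityMeasure ρ] {g : S → ℝ}

theorem pi_meas_ge_abs_average_sub_integral_le (hg : MemLp g 2 ρ) {δ : ℝ} (hδ : 0 < δ)
    {n : ℕ} (hn : n ≠ 0) :
    Measure.pi (fun _ : Fin n => ρ) {s | δ ≤ |(∑ i, g (s i)) / n - ∫ x, g x ∂ρ|} ≤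
      ENNReal.ofReal (Var[g; ρ] / δ ^ 2 / n) := by
  set π := Measure.pi fun _ : Fin n => ρ
  set X : (Fin n → S) → ℝ := ∑ i : Fin n, fun s => g (s i) * (n : ℝ)⁻¹
  have hX : ∀ s, X s = (∑ i, g (s i)) / n := fun s => by
    simp [X, Finset.sum_apply, Finset.sum_mul, div_eq_mul_inv]
  have hg_n : MemLp (fun x => g x * (n : ℝ)⁻¹) 2 ρ := hg.mul_const _
  have hXmem : MemLp X 2 π :=
    memLp_finsetSum' _ fun i _ => hg_n.comp_measurePreserving (measurePreserving_eval _ i)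
  have hmean : π[X] = ∫ x, g x ∂ρ := by
    simp_rw [X, π, Finset.sum_apply]
    rw [integral_finsetSum _ fun i _ => ?_]
    · simp_rw [integral_comp_eval (μ := fun _ : Fin n => ρ) hg_n.1, integral_mul_const]
      simp only [Finset.sum_const, Finset.card_univ, Fintype.card_fin, nsmul_eq_mul]
      field_simp
    · exact (hg_n.comp_measurePreserving (measurePreserving_eval _ i)).integrable one_le_two
  have hvar : Var[X; π] = Var[g; ρ] / n := by
    rw [variance_sum_pi fun _ => hg_n]
    rw [Finset.sum_const, variance_mul_const]
    simp only [Finset.card_univ, Fintype.card_fin, inv_pow, nsmul_eq_mul]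
    field_simp
  calc π {s | δ ≤ |(∑ i, g (s i)) / n - ∫ x, g x ∂ρ|} = π {s | δ ≤ |X s - π[X]|} := by
        rw [hmean]
        simp_rw [hX]
    _ ≤ ENNReal.ofReal (Var[X; π] / δ ^ 2) := meas_ge_le_variance_div_sq hXmem hδ
    _ = ENNReal.ofReal (Var[g; ρ] / δ ^ 2 / n) := by
        rw [hvar, div_right_comm]

theorem tendsto_pi_meas_ge_abs_average_sub_integral (hg : MemLp g 2 ρ) {δ : ℝ} (hδ : 0 < δ) :
    Tendsto (fun n : ℕ => Measure.pi (fun _ : Fin n => ρ)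
      {s | δ ≤ |(∑ i, g (s i)) / n - ∫ x, g x ∂ρ|}) atTop (𝓝 0) := by
  have hbound : Tendsto (fun n : ℕ => ENNReal.ofReal (Var[g; ρ] / δ ^ 2 / n)) atTop (𝓝 0) := by
    simpa using ENNReal.tendsto_ofReal (tendsto_const_div_atTop_nhds_zero_nat (Var[g; ρ] / δ ^ 2))
  refine tendsto_of_tendsto_of_tendsto_of_le_of_le' tendsto_const_nhds hbound
    (Eventually.of_forall fun _ => zero_le) ?_
  filter_upwards [eventually_ne_atTop 0] with n hn
  exact pi_meas_ge_abs_average_sub_integral_le ρ hg hδ hn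

end WeakLaw

theorem inProbability_empirical_le_nhds [TopologicalSpace S] [MeasurableSpace S]
    [OpensMeasurableSpace S] (ρ : ProbabilityMeasure S) :
    inProbability atTop (fun n => Measure.pi fun _ : Fin (n + 1) => (ρ : Measure S))
      (fun _ s => empirical s) ≤ 𝓝 ρ := by
  rw [← tendsto_id', ProbabilityMeasure.tendsto_iff_forall_integral_tendsto]
  intro f
  rw [Tendsto, map_inProbability, inProbability_le_nhds_iff]
  intro δ hδ
  simp only [id, integral_empirical _ f.continuous.stronglyMeasurable, Real.dist_eq]
  exact (tendsto_add_atTop_iff_nat 1).2 <| tendsto_pi_meas_ge_abs_average_sub_integral _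
    (.of_bound f.continuous.aestronglyMeasurable ‖f‖ (ae_of_all _ f.norm_coe_le_norm)) hδ

/-- The sequence of product laws ρ^{⊗n} is ρ-chaotic; equivalently the empirical measures
of n i.i.d. ρ-samples converge in law to the constant ρ. -/
theorem stmt_5 {S : Type*} [MetricSpace S] [TopologicalSpace.SeparableSpace S]
    [MeasurableSpace S] [BorelSpace S] (ρ : ProbabilityMeasure S) :
    IsChaotic (fun n => Measure.pi fun _ : Fin n => (ρ : Measure S)) (ρ : Measure S) ∧
      ∀ φ : ProbabilityMeasure S →ᵇ ℝ,
        Tendsto (fun n => ∫ s, φ (empirical s) ∂ (Measure.pi fun _ : Fin (n + 1) => (ρ : Measure S)))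
          atTop (𝓝 (φ ρ)) :=
  ⟨isChaotic_pi (ρ : Measure S), fun φ => tendsto_integral_of_inProbability_le_nhds
    (inProbability_empirical_le_nhds ρ) φ
    fun _ => (φ.continuous.comp continuous_empirical).aestronglyMeasurable⟩
end
end

section
/- Let X be a Polish space, D₁ ⊆ D₂ ⊆ ⋯ Borel subsets with dense union, f_n : D_n → ℝ measurable and uniformly bounded by B, and f : X → ℝ continuous such that f_n → f uniformly on compact sets in the sense: for every compact K and ε > 0, eventually |f(d) − f_n(d)| < ε for all d ∈ D_n ∩ K. Then for every weakly convergent sequence of probability measures {μ_n} on X with μ_n(D_n) = 1 and μ_n → μ, the integrals ∫ f_n dμ_n converge to ∫ f dμ. -/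
/-!
Split `∫_{Dₙ} fₙ dμₙ = ∫_{Dₙ} (fₙ - g) dμₙ + ∫ g dμₙ`, the last integral being over all of `X`
because `μₙ(Dₙ) = 1`. As a pointwise limit of the `fₙ` on the dense set `⋃ Dₙ`, the continuous
`g` is bounded by `B`, so `∫ g dμₙ → ∫ g dν` by weak convergence. A weakly convergent sequence
of probability measures on a Polish space is tight (Prokhorov): given `δ > 0` there is a compact
`K` with `μₙ(Kᶜ) ≤ δ` for all `n`. On `Dₙ ∩ K` the error `fₙ - g` is eventually below `δ`, and on
`Dₙ \ K` it is bounded by `2B` on a set of mass at most `δ`.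
-/

open MeasureTheory Filter Topology BoundedContinuousFunction
open scoped ENNReal NNReal
noncomputable section
variable {S : Type*}

open Set

lemma isTightMeasureSet_range_of_tendsto {X : Type*} [PseudoMetricSpace X] [CompleteSpace X]
    [SecondCountableTopology X] [MeasurableSpace X] [BorelSpace X]
    {μ : ℕ → ProbabilityMeasure X} {ν : ProbabilityMeasure X} (h : Tendsto μ atTop (𝓝 ν)) :
    IsTightMeasureSet (range fun n => (μ n : Measure X)) := by
  refine (isTightMeasureSet_of_isCompact_closure h.isCompact_insert_range.closure).subset ?_
  rintro _ ⟨n, rfl⟩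
  exact ⟨μ n, mem_insert_of_mem _ (mem_range_self n), rfl⟩

lemma tendsto_setIntegral_zero_of_isTightMeasureSet {X E : Type*} [TopologicalSpace X]
    [T2Space X] [MeasurableSpace X] [OpensMeasurableSpace X] [NormedAddCommGroup E]
    [NormedSpace ℝ E] {μ : ℕ → Measure X} [∀ n, IsProbabilityMeasure (μ n)]
    (hμ : IsTightMeasureSet (range μ)) {s : ℕ → Set X} {h : ℕ → X → E}
    (hint : ∀ n, IntegrableOn (h n) (s n) (μ n)) {C : ℝ} (hC : ∀ n, ∀ x ∈ s n, ‖h n x‖ ≤ C)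
    (hK : ∀ K, IsCompact K → ∀ ε > 0, ∀ᶠ n in atTop, ∀ x ∈ s n ∩ K, ‖h n x‖ ≤ ε) :
    Tendsto (fun n => ∫ x in s n, h n x ∂μ n) atTop (𝓝 0) := by
  rw [NormedAddGroup.tendsto_nhds_zero]
  intro ε hε
  set δ := ε / (|C| + 2)
  have hδ : 0 < δ := by positivity
  obtain ⟨K, hKc, hμK⟩ :=
    isTightMeasureSet_iff_exists_isCompact_measure_compl_le.1 hμ (ENNReal.ofReal δ) (by simpa)
  filter_upwards [hK K hKc δ hδ] with n hn
  have hout : (μ n).real (s n \ K) ≤ δ :=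
    ENNReal.toReal_le_of_le_ofReal hδ.le
      ((measure_mono fun _ hx => hx.2).trans (hμK _ (mem_range_self n)))
  have hin : ‖∫ x in s n ∩ K, h n x ∂μ n‖ ≤ δ * (μ n).real (s n ∩ K) :=
    norm_setIntegral_le_of_norm_le_const (measure_lt_top _ _) hn
  have hdiff : ‖∫ x in s n \ K, h n x ∂μ n‖ ≤ C * (μ n).real (s n \ K) :=
    norm_setIntegral_le_of_norm_le_const (measure_lt_top _ _) fun x hx => hC n x hx.1
  rw [← integral_inter_add_sdiff hKc.measurableSet (hint n)]
  calc ‖(∫ x in s n ∩ K, h n x ∂μ n) + ∫ x in s n \ K, h n x ∂μ n‖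
      ≤ δ * (μ n).real (s n ∩ K) + C * (μ n).real (s n \ K) :=
        (norm_add_le _ _).trans (add_le_add hin hdiff)
    _ ≤ δ * 1 + |C| * δ :=
        add_le_add (mul_le_mul_of_nonneg_left measureReal_le_one hδ.le)
          ((mul_le_mul_of_nonneg_right (le_abs_self C) measureReal_nonneg).trans
            (mul_le_mul_of_nonneg_left hout (abs_nonneg C)))
    _ < ε := by
        have : δ * (|C| + 2) = ε := div_mul_cancel₀ ε (by positivity)
        nlinarith

lemma tendsto_apply_of_forall_isCompact {X : Type*} [TopologicalSpace X] {D : ℕ → Set X}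
    (hmono : Monotone D) {f : ℕ → X → ℝ} {g : X → ℝ}
    (hD : ∀ K : Set X, IsCompact K → ∀ ε : ℝ, 0 < ε → ∃ N : ℕ, ∀ n ≥ N, ∀ d ∈ D n ∩ K,
      |g d - f n d| < ε)
    {m : ℕ} {x : X} (hx : x ∈ D m) : Tendsto (fun n => f n x) atTop (𝓝 (g x)) := by
  refine Metric.tendsto_atTop.2 fun ε hε => ?_
  obtain ⟨N, hN⟩ := hD {x} isCompact_singleton ε hε
  refine ⟨max N m, fun n hn => ?_⟩
  rw [Real.dist_eq, abs_sub_comm]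
  exact hN n (le_of_max_le_left hn) x ⟨hmono (le_of_max_le_right hn) hx, rfl⟩

lemma abs_le_of_tendsto_of_dense_iUnion {X : Type*} [TopologicalSpace X] {D : ℕ → Set X}
    (hmono : Monotone D) (hdense : Dense (⋃ n, D n)) {f : ℕ → X → ℝ} {B : ℝ}
    (hB : ∀ n, ∀ d ∈ D n, |f n d| ≤ B) {g : X → ℝ} (hg : Continuous g)
    (hlim : ∀ m, ∀ x ∈ D m, Tendsto (fun n => f n x) atTop (𝓝 (g x))) (x : X) :
    |g x| ≤ B := by
  have hsub : (⋃ n, D n) ⊆ {x | |g x| ≤ B} := by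
    simp only [iUnion_subset_iff]
    intro m y hy
    exact le_of_tendsto (hlim m y hy).abs
      (eventually_atTop.2 ⟨m, fun n hn => hB n y (hmono hn hy)⟩)
  have hclosed : IsClosed {x | |g x| ≤ B} := isClosed_le hg.abs continuous_const
  exact hclosed.closure_subset_iff.2 hsub (hdense x)

/-- Lemma 4.1, [D] ⟹ [A] (X Polish): if the fₙ are uniformly bounded and converge uniformly
on compacts (relative to Dₙ) to a continuous f, then for every weakly convergent sequence
μₙ → μ of laws with μₙ(Dₙ) = 1, the integrals ∫ fₙ dμₙ converge to ∫ f dμ. -/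
theorem stmt_9 {X : Type*} [MetricSpace X] [CompleteSpace X]
    [TopologicalSpace.SeparableSpace X] [MeasurableSpace X] [BorelSpace X]
    (D : ℕ → Set X) (hmono : Monotone D) (hDm : ∀ n, MeasurableSet (D n))
    (hdense : Dense (⋃ n, D n)) (f : ℕ → X → ℝ)
    (hfm : ∀ n, Measurable fun x : D n => f n x.1)
    (B : ℝ) (hB : ∀ n, ∀ d ∈ D n, |f n d| ≤ B)
    (g : X → ℝ) (hg : Continuous g)
    (hD : ∀ K : Set X, IsCompact K → ∀ ε : ℝ, 0 < ε → ∃ N : ℕ, ∀ n ≥ N, ∀ d ∈ D n ∩ K,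
      |g d - f n d| < ε)
    (μ : ℕ → ProbabilityMeasure X) (hsupp : ∀ n, (μ n : Measure X) (D n) = 1)
    (ν : ProbabilityMeasure X)
    (hw : ∀ φ : X →ᵇ ℝ, Tendsto (fun n => ∫ x, φ x ∂ (μ n : Measure X)) atTop
      (𝓝 (∫ x, φ x ∂ (ν : Measure X)))) :
    Tendsto (fun n => ∫ x in D n, f n x ∂ (μ n : Measure X)) atTop
      (𝓝 (∫ x, g x ∂ (ν : Measure X))) := by
  have hgB : ∀ x, |g x| ≤ B := abs_le_of_tendsto_of_dense_iUnion hmono hdense hB hg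
    fun _ _ hx => tendsto_apply_of_forall_isCompact hmono hD hx
  let G : X →ᵇ ℝ := .ofNormedAddCommGroup g hg B hgB
  have hfint : ∀ n, IntegrableOn (f n) (D n) (μ n) := fun n =>
    .of_bound (measure_lt_top _ _)
      (aemeasurable_restrict_of_measurable_subtype (hDm n) (hfm n)).aestronglyMeasurable B
      (ae_restrict_of_forall_mem (hDm n) (hB n))
  have hgint : ∀ n, IntegrableOn g (D n) (μ n) := fun n => (G.integrable _).integrableOn
  have hfull : ∀ n, (μ n : Measure X).restrict (D n) = μ n := fun n =>
    Measure.restrict_eq_self_of_ae_mem ((mem_ae_iff_prob_eq_one (hDm n)).2 (hsupp n))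
  have herr : Tendsto (fun n => ∫ x in D n, (f n x - g x) ∂μ n) atTop (𝓝 0) := by
    refine tendsto_setIntegral_zero_of_isTightMeasureSet (C := B + B)
      (isTightMeasureSet_range_of_tendsto
        (ProbabilityMeasure.tendsto_iff_forall_integral_tendsto.2 hw))
      (fun n => (hfint n).sub (hgint n))
      (fun n x hx => (abs_sub _ _).trans (add_le_add (hB n x hx) (hgB x))) ?_
    intro K hK ε hε
    obtain ⟨N, hN⟩ := hD K hK ε hε
    refine eventually_atTop.2 ⟨N, fun n hn x hx => ?_⟩
    rw [Real.norm_eq_abs, abs_sub_comm]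
    exact (hN n hn x hx).le
  have hlim : Tendsto (fun n => ∫ x, g x ∂(μ n : Measure X)) atTop
      (𝓝 (∫ x, g x ∂(ν : Measure X))) := hw G
  refine (zero_add (∫ x, g x ∂(ν : Measure X)) ▸ herr.add hlim).congr fun n => ?_
  rw [integral_sub (hfint n) (hgint n), hfull n, sub_add_cancel]
end
end

section
/- Let S and T be separable metric spaces and K_n a Markov transition kernel from S^n to T^n satisfying the permutation-equivariance K_n(π·s, π·A) = K_n(s, A) for all permutations π, points s ∈ S^n, and Borel A ⊆ T^n. Then the map H_n(ζ, G) := ∫ J_n(ζ, ds) K_n(s, ε_n^{-1}(G)), where J_n(ζ,·) is the uniform law on the finite set ε_n^{-1}({ζ}) ⊆ S^n, defines a Markov transition kernel from ε_n(S^n) ⊆ P(S) to ε_n(T^n) ⊆ P(T). Moreover, for every s ∈ S^n, the symmetrization K̃_n(s,·) of K_n(s,·) satisfies K̃_n(s,·) ∘ ε_n^{-1} = H_n(ε_n(s), ·). -/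
open MeasureTheory Filter Topology BoundedContinuousFunction
open scoped ENNReal NNReal
noncomputable section
variable {S : Type*}

open ProbabilityTheory in
/-- The uniform law on the fiber of the empirical measure map over ζ ∈ εₙ(Sⁿ). -/
def fiberUniform {S : Type*} [MeasurableSpace S] {n : ℕ} [NeZero n]
    (ζ : ProbabilityMeasure S) : Measure (Fin n → S) :=
  uniformOn ((fun s : Fin n → S => empirical s) ⁻¹' {ζ})

/-- The induced transition H_n(ζ, ·) = ∫ J_n(ζ, ds) K_n(s, εₙ⁻¹(·)), as a measure on P(T). -/
def inducedTransition {S T : Type*} [MeasurableSpace S] [MeasurableSpace T] {n : ℕ} [NeZero n]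
    (K : ProbabilityTheory.Kernel (Fin n → S) (Fin n → T))
    (ζ : ProbabilityMeasure S) : Measure (ProbabilityMeasure T) :=
  (fiberUniform ζ).bind (fun s => (K s).map (fun t : Fin n → T => empirical t))

/-!
Two configurations have the same empirical measure iff they differ by a permutation (compare the
masses of singletons), so every fiber of `εₙ` is a finite orbit, and equivariance makes
`s ↦ Kₙ(s,·) ∘ εₙ⁻¹` constant on it. Averaging over the fiber thus gives
`Hₙ(εₙ(s),·) = Kₙ(s,·) ∘ εₙ⁻¹`, the image of a probability measure under a measurable map, and since
`εₙ` is permutation invariant, symmetrizing `Kₙ(s,·)` does not change this image.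
-/

lemma MeasureTheory.Measure.map_apply_range_eq_one {α β : Type*} [MeasurableSpace α]
    [MeasurableSpace β] {μ : Measure α} [IsProbabilityMeasure μ] {f : α → β}
    (hf : AEMeasurable f μ) : μ.map f (Set.range f) = 1 := by
  have := Measure.isProbabilityMeasure_map hf
  refine le_antisymm prob_le_one ?_
  simpa using Measure.le_map_apply hf (Set.range f)

section PermInvariant

variable {α β : Type*} [MeasurableSpace α] [MeasurableSpace β] {n : ℕ}
  {f : (Fin n → α) → β}

lemma map_map_comp_perm_of_invariant (hf : Measurable f)
    (hinv : ∀ (π : Equiv.Perm (Fin n)) u, f (fun i => u (π i)) = f u)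
    (ρ : Measure (Fin n → α)) (π : Equiv.Perm (Fin n)) :
    (ρ.map fun u i => u (π i)).map f = ρ.map f := by
  rw [Measure.map_map hf (by fun_prop)]
  exact congrArg (ρ.map ·) (funext (hinv π))

lemma symmetrize_map_of_invariant (hf : Measurable f)
    (hinv : ∀ (π : Equiv.Perm (Fin n)) u, f (fun i => u (π i)) = f u)
    (ρ : Measure (Fin n → α)) :
    (symmetrize ρ).map f = ρ.map f := by
  rw [symmetrize, Measure.map_smul, Measure.map_finset_sum' hf.aemeasurable]
  simp_rw [map_map_comp_perm_of_invariant hf hinv]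
  rw [Finset.sum_const, Finset.card_univ, Fintype.card_perm, Fintype.card_fin,
    ← Nat.cast_smul_eq_nsmul ℝ≥0∞, smul_smul, ENNReal.inv_mul_cancel (by exact_mod_cast Nat.factorial_ne_zero n) (by simp), one_smul]

end PermInvariant

section Empirical

variable {α : Type*} [MeasurableSpace α] {n : ℕ}

lemma empMeasure_singleton [MeasurableSingletonClass α] (s : Fin n → α) (x : α) :
    empMeasure s {x} = (n : ℝ≥0∞)⁻¹ * Nat.card {i // s i = x} := by
  classical
  simp [empMeasure, Set.indicator_apply, Nat.card_eq_fintype_card, Fintype.card_subtype]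

variable [NeZero n]

lemma empirical_comp_perm (π : Equiv.Perm (Fin n)) (u : Fin n → α) :
    empirical (fun i => u (π i)) = empirical u :=
  Subtype.ext <| congrArg (_ • ·) (Equiv.sum_comp π fun i => Measure.dirac (u i))

lemma measurable_empirical : Measurable (fun s : Fin n → α => empirical s) := by
  refine Measurable.subtype_mk (Measure.measurable_of_measurable_coe _ fun A hA => ?_)
  simp only [empMeasure, Measure.smul_apply, Measure.finsetSum_apply, smul_eq_mul,
    Measure.dirac_apply' _ hA]
  exact Measurable.const_mul (Finset.measurable_sum _ fun i _ =>
    (measurable_one.indicator hA).comp (measurable_pi_apply i)) _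

lemma exists_perm_of_empirical_eq [MeasurableSingletonClass α] {f g : Fin n → α}
    (h : empirical f = empirical g) : ∃ σ : Equiv.Perm (Fin n), f = g ∘ σ := by
  have hcard (x : α) : Nat.card {i // f i = x} = Nat.card {i // g i = x} := by
    have hx : empMeasure f {x} = empMeasure g {x} :=
      congrArg (fun ζ : ProbabilityMeasure α => (ζ : Measure α) {x}) h
    rw [empMeasure_singleton, empMeasure_singleton] at hx
    exact_mod_cast (ENNReal.mul_right_inj (by simp) (by simp [NeZero.ne n])).mp hx
  let σ := Equiv.ofFiberEquiv fun x => ((Finite.card_eq.mp (hcard x)).some)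
  exact ⟨σ, funext fun i => (Equiv.ofFiberEquiv_map _ i).symm⟩

lemma finite_empirical_fiber [MeasurableSingletonClass α] (s : Fin n → α) :
    ((fun s' : Fin n → α => empirical s') ⁻¹' {empirical s}).Finite := by
  refine (Set.finite_range fun σ : Equiv.Perm (Fin n) => s ∘ σ).subset fun s' hs' => ?_
  obtain ⟨σ, hσ⟩ := exists_perm_of_empirical_eq (hs' : empirical s' = empirical s)
  exact ⟨σ, hσ.symm⟩

end Empirical

namespace ProbabilityTheory.Kernel

variable {α β : Type*} [MeasurableSpace α] [MeasurableSpace β] {n : ℕ}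

def IsPermEquivariant (K : Kernel (Fin n → α) (Fin n → β)) : Prop :=
  ∀ (π : Equiv.Perm (Fin n)) (s : Fin n → α) (A : Set (Fin n → β)), MeasurableSet A →
    K (fun i => s (π i)) {u : Fin n → β | (fun i => u (π.symm i)) ∈ A} = K s A

lemma IsPermEquivariant.apply_comp_perm {K : Kernel (Fin n → α) (Fin n → β)}
    (hK : K.IsPermEquivariant) (π : Equiv.Perm (Fin n)) (s : Fin n → α) :
    K (fun i => s (π i)) = (K s).map fun u i => u (π i) := by
  have hπ : Measurable fun (u : Fin n → β) i => u (π i) := by fun_prop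
  ext A hA
  rw [Measure.map_apply hπ hA, ← hK π s _ (hπ hA)]
  congr 1
  ext u
  simp

end ProbabilityTheory.Kernel

section InducedTransition

open ProbabilityTheory

variable {α β : Type*} [MeasurableSpace α] [MeasurableSpace β] {n : ℕ} [NeZero n]

lemma isProbabilityMeasure_fiberUniform [MeasurableSingletonClass α] (s : Fin n → α) :
    IsProbabilityMeasure (fiberUniform (n := n) (empirical s)) :=
  isProbabilityMeasure_uniformOn (finite_empirical_fiber s) ⟨s, rfl⟩

lemma inducedTransition_empirical [MeasurableSingletonClass α]
    {K : Kernel (Fin n → α) (Fin n → β)} (hK : K.IsPermEquivariant) (s : Fin n → α) :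
    inducedTransition K (empirical s) = (K s).map fun t => empirical t := by
  have := isProbabilityMeasure_fiberUniform s
  have hfiber : ∀ᵐ s' ∂fiberUniform (n := n) (empirical s), empirical s' = empirical s :=
    ae_cond_mem (finite_empirical_fiber s).measurableSet
  have hconst : ∀ᵐ s' ∂fiberUniform (n := n) (empirical s),
      (K s').map (fun t => empirical t) = (K s).map fun t => empirical t := by
    filter_upwards [hfiber] with s' hs'
    obtain ⟨σ, rfl⟩ := exists_perm_of_empirical_eq hs'
    exact (hK.apply_comp_perm σ s).symm ▸
      map_map_comp_perm_of_invariant measurable_empirical empirical_comp_perm _ σ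
  rw [inducedTransition, Measure.bind_congr_right hconst, Measure.bind_const, measure_univ,
    one_smul]

end InducedTransition

theorem stmt_13_general {S T : Type*} [MetricSpace S] [MeasurableSpace S] [BorelSpace S]
    [MeasurableSpace T] (n : ℕ) [NeZero n]
    (K : ProbabilityTheory.Kernel (Fin n → S) (Fin n → T))
    [ProbabilityTheory.IsMarkovKernel K]
    (hequiv : ∀ (π : Equiv.Perm (Fin n)) (s : Fin n → S) (A : Set (Fin n → T)),
      MeasurableSet A →
      K (fun i => s (π i)) {u : Fin n → T | (fun i => u (π.symm i)) ∈ A} = K s A) :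
    (∀ s : Fin n → S,
        IsProbabilityMeasure (inducedTransition K (empirical s)) ∧
        inducedTransition K (empirical s)
          (Set.range (fun t : Fin n → T => empirical t)) = 1) ∧
      Measurable (fun s : Fin n → S => inducedTransition K (empirical s)) ∧
      ∀ s : Fin n → S,
        (symmetrize (K s : Measure (Fin n → T))).map (fun t : Fin n → T => empirical t) =
          inducedTransition K (empirical s) := by
  have key := inducedTransition_empirical (K := K) hequiv
  refine ⟨fun s => ?_, ?_, fun s => ?_⟩
  · rw [key s]
    exact ⟨Measure.isProbabilityMeasure_map measurable_empirical.aemeasurable,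
      Measure.map_apply_range_eq_one measurable_empirical.aemeasurable⟩
  · simp_rw [key]
    exact (Measure.measurable_map _ measurable_empirical).comp K.measurable
  · rw [symmetrize_map_of_invariant measurable_empirical empirical_comp_perm, key s]

/-- The induced transitions Hₙ form a Markov transition from εₙ(Sⁿ) to εₙ(Tⁿ), and the
symmetrization of Kₙ(s,·) pushes forward under εₙ to Hₙ(εₙ(s),·). -/
theorem stmt_13 {S T : Type*} [MetricSpace S] [TopologicalSpace.SeparableSpace S]
    [MeasurableSpace S] [BorelSpace S]
    [MetricSpace T] [TopologicalSpace.SeparableSpace T] [MeasurableSpace T] [BorelSpace T]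
    (n : ℕ) [NeZero n]
    (K : ProbabilityTheory.Kernel (Fin n → S) (Fin n → T))
    [ProbabilityTheory.IsMarkovKernel K]
    (hequiv : ∀ (π : Equiv.Perm (Fin n)) (s : Fin n → S) (A : Set (Fin n → T)),
      MeasurableSet A →
      K (fun i => s (π i)) {u : Fin n → T | (fun i => u (π.symm i)) ∈ A} = K s A) :
    (∀ s : Fin n → S,
        IsProbabilityMeasure (inducedTransition K (empirical s)) ∧
        inducedTransition K (empirical s)
          (Set.range (fun t : Fin n → T => empirical t)) = 1) ∧
      Measurable (fun s : Fin n → S => inducedTransition K (empirical s)) ∧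
      ∀ s : Fin n → S,
        (symmetrize (K s : Measure (Fin n → T))).map (fun t : Fin n → T => empirical t) =
          inducedTransition K (empirical s) :=
  stmt_13_general n K hequiv
end
end

section
/- Let S = {0,1} and define Markov kernels K_n on S^n by K_n(s,·) = δ_{(0,…,0)} if s = (0,…,0), and K_n(s,·) = δ_{(1,…,1)} otherwise. Then (a) for every ρ ∈ P(S), the sequence {∫ K_n(s,·) ρ^{⊗n}(ds)} is chaotic (chaos propagates for purely product initial data), but (b) there exists a δ(0)-chaotic sequence of symmetric laws {ρ_n} for which {∫ K_n(s,·) ρ_n(ds)} is not chaotic; hence {K_n} does not propagate chaos in the strong sense. -/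
open MeasureTheory Filter Topology BoundedContinuousFunction
open scoped ENNReal NNReal
noncomputable section
variable {S : Type*}

/-- The kernel on {0,1}ⁿ that sends (0,…,0) to δ_{(0,…,0)} and every other state to
δ_{(1,…,1)} (with false = 0, true = 1). -/
def flipKernel (n : ℕ) (s : Fin n → Bool) : Measure (Fin n → Bool) :=
  if s = (fun _ => false) then Measure.dirac (fun _ => false)
  else Measure.dirac (fun _ => true)

/-! The kernel collapses a law `μ` on `{0,1}ⁿ` onto `q δ_{(0,…,0)} + (1 - q) δ_{(1,…,1)}` with
`q = μ {(0,…,0)}`, and along a sequence with `q → q₀` the `k`-marginals of this mixture converge to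
`q₀ δ₀^{⊗k} + (1 - q₀) δ₁^{⊗k}`, which is a product measure only when `q₀ ∈ {0, 1}`.
For product initial data `q = ρ(0)ⁿ` is constantly `1` or tends to `0`. The counterexample puts
mass `(n+1)/(2n+1)` at the origin and spreads the rest uniformly over the unit vectors: a fixed
block of `k` coordinates vanishes with probability `1 - O(k/n)`, so it is `δ(0)`-chaotic, while
`q → 1/2`. -/

def chaosTest [TopologicalSpace S] {k : ℕ} (φ : Fin k → (S →ᵇ ℝ)) (n : ℕ) (s : Fin n → S) : ℝ :=
  ∏ i : Fin k, if h : (i : ℕ) < n then φ i (s ⟨i, h⟩) else 1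

theorem isChaotic_iff_chaosTest [MeasurableSpace S] [TopologicalSpace S]
    {ρs : ∀ n, Measure (Fin n → S)} {p : Measure S} :
    IsChaotic ρs p ↔ ∀ (k : ℕ) (φ : Fin k → (S →ᵇ ℝ)),
      Tendsto (fun n => ∫ s, chaosTest φ n s ∂ρs n) atTop (𝓝 (∏ i, ∫ x, φ i x ∂p)) :=
  Iff.rfl

theorem chaosTest_const [TopologicalSpace S] {k n : ℕ} (φ : Fin k → (S →ᵇ ℝ)) (hkn : k ≤ n)
    (c : S) : chaosTest φ n (fun _ => c) = ∏ i, φ i c :=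
  Finset.prod_congr rfl fun i _ => dif_pos (i.isLt.trans_le hkn)

section FlipKernel

variable {n : ℕ}

theorem flipKernel_eq_dirac (s : Fin n → Bool) :
    flipKernel n s =
      Measure.dirac (if s = (fun _ => false) then fun _ => false else fun _ => true) :=
  (apply_ite Measure.dirac _ _ _).symm

theorem integral_bind_flipKernel (μ : Measure (Fin n → Bool)) [IsProbabilityMeasure μ]
    (g : (Fin n → Bool) → ℝ) :
    ∫ s, g s ∂μ.bind (flipKernel n) =
      μ.real {fun _ => false} * g (fun _ => false)
        + (1 - μ.real {fun _ => false}) * g (fun _ => true) := by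
  have h0 : MeasurableSet ({fun _ => false} : Set (Fin n → Bool)) := .of_discrete
  rw [funext flipKernel_eq_dirac, Measure.bind_dirac_eq_map μ .of_discrete,
    integral_map Measurable.of_discrete.aemeasurable .of_discrete,
    ← integral_add_compl h0 Integrable.of_finite,
    setIntegral_congr_fun h0 (g := fun _ => g fun _ => false) fun s hs => by
      rw [Set.mem_singleton_iff.1 hs, if_pos rfl],
    setIntegral_congr_fun h0.compl (g := fun _ => g fun _ => true) fun s hs => by
      rw [if_neg (Set.mem_compl_singleton_iff.1 hs)],
    setIntegral_const, setIntegral_const, measureReal_compl h0, probReal_univ, smul_eq_mul,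
    smul_eq_mul]

theorem integral_chaosTest_bind_flipKernel {k : ℕ} (μ : Measure (Fin n → Bool))
    [IsProbabilityMeasure μ] (φ : Fin k → (Bool →ᵇ ℝ)) (hkn : k ≤ n) :
    ∫ s, chaosTest φ n s ∂μ.bind (flipKernel n) =
      μ.real {fun _ => false} * ∏ i, φ i false
        + (1 - μ.real {fun _ => false}) * ∏ i, φ i true := by
  rw [integral_bind_flipKernel, chaosTest_const φ hkn, chaosTest_const φ hkn]

end FlipKernel

section FlipKernelChaos

variable {μ : ∀ n, Measure (Fin n → Bool)} [∀ n, IsProbabilityMeasure (μ n)]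

theorem tendsto_integral_chaosTest_bind_flipKernel {q : ℝ}
    (hq : Tendsto (fun n => (μ n).real {fun _ => false}) atTop (𝓝 q)) {k : ℕ}
    (φ : Fin k → (Bool →ᵇ ℝ)) :
    Tendsto (fun n => ∫ s, chaosTest φ n s ∂(μ n).bind (flipKernel n)) atTop
      (𝓝 (q * ∏ i, φ i false + (1 - q) * ∏ i, φ i true)) := by
  refine ((hq.mul_const _).add ((tendsto_const_nhds.sub hq).mul_const _)).congr' ?_
  filter_upwards [eventually_ge_atTop k] with n hn
  exact (integral_chaosTest_bind_flipKernel (μ n) φ hn).symm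

theorem isChaotic_bind_flipKernel_dirac_false
    (hq : Tendsto (fun n => (μ n).real {fun _ => false}) atTop (𝓝 1)) :
    IsChaotic (fun n => (μ n).bind (flipKernel n)) (Measure.dirac false) :=
  isChaotic_iff_chaosTest.2 fun _ φ => by
    simpa [integral_dirac] using tendsto_integral_chaosTest_bind_flipKernel hq φ

theorem isChaotic_bind_flipKernel_dirac_true
    (hq : Tendsto (fun n => (μ n).real {fun _ => false}) atTop (𝓝 0)) :
    IsChaotic (fun n => (μ n).bind (flipKernel n)) (Measure.dirac true) :=
  isChaotic_iff_chaosTest.2 fun _ φ => by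
    simpa [integral_dirac] using tendsto_integral_chaosTest_bind_flipKernel hq φ

def indicatorTrue : Bool →ᵇ ℝ :=
  mkOfCompact ⟨fun b => if b then 1 else 0, continuous_of_discreteTopology⟩

@[simp] theorem indicatorTrue_apply (b : Bool) : indicatorTrue b = if b then 1 else 0 := rfl

theorem not_isChaotic_bind_flipKernel {q : ℝ}
    (hq : Tendsto (fun n => (μ n).real {fun _ => false}) atTop (𝓝 q)) (hq0 : 0 < q) (hq1 : q < 1)
    (τ : Measure Bool) : ¬ IsChaotic (fun n => (μ n).bind (flipKernel n)) τ := by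
  intro hτ
  -- with `m = ∫ indicatorTrue ∂τ`, the cases `k = 1, 2` give `1 - q = m` and `1 - q = m ^ 2`
  have h1 := tendsto_nhds_unique
    (tendsto_integral_chaosTest_bind_flipKernel hq fun _ : Fin 1 => indicatorTrue) (hτ 1 _)
  have h2 := tendsto_nhds_unique
    (tendsto_integral_chaosTest_bind_flipKernel hq fun _ : Fin 2 => indicatorTrue) (hτ 2 _)
  simp only [Finset.prod_const, Finset.card_univ, Fintype.card_fin, pow_one,
    indicatorTrue_apply, Bool.false_eq_true, if_true, if_false] at h1 h2
  rw [← h1] at h2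
  nlinarith

end FlipKernelChaos

section Spike

def unitVec (n : ℕ) (j : Fin n) : Fin n → Bool := fun i => decide (i = j)

theorem unitVec_ne_zero {n : ℕ} (j : Fin n) : unitVec n j ≠ fun _ => false :=
  fun h => by simpa [unitVec] using congr_fun h j

theorem unitVec_comp_perm {n : ℕ} (π : Equiv.Perm (Fin n)) (j : Fin n) :
    (fun i => unitVec n j (π i)) = unitVec n (π.symm j) := by
  funext i
  simp [unitVec, Equiv.eq_symm_apply]

-- The weight `(n+1)/(2n+1)` rather than `1/2` makes this a probability measure also for `n = 0`.
def spikeMeasure (n : ℕ) : Measure (Fin n → Bool) :=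
  ((2 * n + 1 : ℕ) : ℝ≥0∞)⁻¹ •
    (((n + 1 : ℕ) : ℝ≥0∞) • Measure.dirac (fun _ => false) + ∑ j, Measure.dirac (unitVec n j))

instance (n : ℕ) : IsProbabilityMeasure (spikeMeasure n) := by
  constructor
  rw [spikeMeasure, Measure.smul_apply, Measure.add_apply, Measure.smul_apply,
    Measure.finsetSum_apply]
  simp only [measure_univ, Finset.sum_const, Finset.card_univ, Fintype.card_fin, smul_eq_mul,
    nsmul_eq_mul, mul_one]
  rw [← Nat.cast_add, show n + 1 + n = 2 * n + 1 by ring]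
  exact ENNReal.inv_mul_cancel (by simp) (ENNReal.natCast_ne_top _)

theorem isSymmetric_spikeMeasure (n : ℕ) : IsSymmetric (spikeMeasure n) := by
  intro π
  have hπ : Measurable (fun (s : Fin n → Bool) i => s (π i)) := .of_discrete
  have hsum : (∑ j, Measure.dirac (unitVec n j)).map (fun s i => s (π i)) =
      ∑ j, Measure.dirac (unitVec n j) := by
    rw [← Measure.mapₗ_apply_of_measurable hπ, map_sum]
    simp_rw [Measure.mapₗ_apply_of_measurable hπ, Measure.map_dirac' hπ, unitVec_comp_perm]
    exact π.symm.sum_comp fun j => Measure.dirac (unitVec n j)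
  simp only [spikeMeasure, Measure.map_smul, Measure.map_add _ _ hπ, Measure.map_dirac' hπ, hsum]

theorem measureReal_spikeMeasure_zero (n : ℕ) :
    (spikeMeasure n).real {fun _ => false} = (n + 1) / (2 * n + 1) := by
  simp [spikeMeasure, measureReal_def, unitVec_ne_zero, ENNReal.toReal_inv, ENNReal.toReal_add,
    ENNReal.mul_eq_top, div_eq_inv_mul]

theorem integral_spikeMeasure {n : ℕ} (g : (Fin n → Bool) → ℝ) :
    ∫ s, g s ∂spikeMeasure n =
      ((n + 1) * g (fun _ => false) + ∑ j, g (unitVec n j)) / (2 * n + 1) := by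
  rw [spikeMeasure, integral_smul_measure,
    integral_add_measure (Integrable.of_finite.smul_measure (ENNReal.natCast_ne_top _))
      (integrable_finsetSum_measure.2 fun _ _ => Integrable.of_finite),
    integral_smul_measure, integral_finsetSum_measure fun _ _ => Integrable.of_finite]
  simp [integral_dirac, ENNReal.toReal_inv, ENNReal.toReal_add, ENNReal.mul_eq_top,
    div_eq_inv_mul]

theorem chaosTest_unitVec {k n : ℕ} (φ : Fin k → (Bool →ᵇ ℝ)) (hkn : k ≤ n) (j : Fin n) :
    chaosTest φ n (unitVec n j) = ∏ i : Fin k, φ i (decide ((i : ℕ) = j)) :=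
  Finset.prod_congr rfl fun i _ => by
    rw [dif_pos (i.isLt.trans_le hkn)]
    simp [unitVec, Fin.ext_iff]

theorem sum_chaosTest_unitVec {k n : ℕ} (φ : Fin k → (Bool →ᵇ ℝ)) (hkn : k ≤ n) :
    ∑ j, chaosTest φ n (unitVec n j) =
      ∑ j ∈ Finset.range k, ∏ i : Fin k, φ i (decide ((i : ℕ) = j))
        + (n - k) * ∏ i, φ i false := by
  set R : ℕ → ℝ := fun j => ∏ i : Fin k, φ i (decide ((i : ℕ) = j))
  have hR : ∀ j ∈ Finset.Ico k n, R j = ∏ i, φ i false := fun j hj =>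
    Finset.prod_congr rfl fun i _ => by
      have : (i : ℕ) ≠ j := (i.isLt.trans_le (Finset.mem_Ico.1 hj).1).ne
      simp [this]
  calc ∑ j, chaosTest φ n (unitVec n j) = ∑ j : Fin n, R j :=
        Finset.sum_congr rfl fun j _ => chaosTest_unitVec φ hkn j
    _ = ∑ j ∈ Finset.range k, R j + ∑ j ∈ Finset.Ico k n, R j := by
        rw [Fin.sum_univ_eq_sum_range R n, Finset.sum_range_add_sum_Ico R hkn]
    _ = _ := by
        rw [Finset.sum_congr rfl hR, Finset.sum_const, Nat.card_Ico, nsmul_eq_mul,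
          Nat.cast_sub hkn]

theorem tendsto_inv_two_mul_add_one :
    Tendsto (fun n : ℕ => ((2 * n + 1 : ℝ))⁻¹) atTop (𝓝 0) :=
  tendsto_inv_atTop_zero.comp <| tendsto_atTop_add_const_right _ _ <|
    tendsto_natCast_atTop_atTop.const_mul_atTop two_pos

theorem tendsto_measureReal_spikeMeasure_zero :
    Tendsto (fun n => (spikeMeasure n).real {fun _ => false}) atTop (𝓝 (1 / 2)) := by
  have h := (tendsto_inv_two_mul_add_one.const_mul (1 / 2)).const_add (1 / 2)
  simp only [mul_zero, add_zero] at h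
  refine h.congr fun n => ?_
  rw [measureReal_spikeMeasure_zero]
  field_simp
  ring

theorem isChaotic_spikeMeasure : IsChaotic spikeMeasure (Measure.dirac false) :=
  isChaotic_iff_chaosTest.2 fun k φ => by
    set C := ∑ j ∈ Finset.range k, ∏ i : Fin k, φ i (decide ((i : ℕ) = j))
    have h := (tendsto_inv_two_mul_add_one.const_mul (C - k * ∏ i, φ i false)).const_add
      (∏ i, φ i false)
    simp only [mul_zero, add_zero] at h
    simp only [integral_dirac]
    refine h.congr' ?_
    filter_upwards [eventually_ge_atTop k] with n hn
    rw [integral_spikeMeasure, sum_chaosTest_unitVec φ hn, chaosTest_const φ hn]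
    field_simp
    ring

end Spike

/-- This kernel propagates chaos in the weak sense (for product initial data) but not in
the strong sense: some δ(0)-chaotic sequence of symmetric laws is not mapped to a chaotic
sequence. -/
theorem stmt_17 :
    (∀ ρ : ProbabilityMeasure Bool, ∃ τ : ProbabilityMeasure Bool,
        IsChaotic
          (fun n => (Measure.pi fun _ : Fin n => (ρ : Measure Bool)).bind (flipKernel n))
          (τ : Measure Bool)) ∧
      ∃ ρs : ∀ n, ProbabilityMeasure (Fin n → Bool),
        (∀ n, IsSymmetric (ρs n : Measure (Fin n → Bool))) ∧
        IsChaotic (fun n => (ρs n : Measure (Fin n → Bool))) (Measure.dirac false) ∧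
        ¬ ∃ τ : ProbabilityMeasure Bool,
            IsChaotic (fun n => (ρs n : Measure (Fin n → Bool)).bind (flipKernel n))
              (τ : Measure Bool) := by
  refine ⟨fun ρ => ?_, fun n => ⟨spikeMeasure n, inferInstance⟩, isSymmetric_spikeMeasure,
    isChaotic_spikeMeasure, fun ⟨τ, hτ⟩ => not_isChaotic_bind_flipKernel
      tendsto_measureReal_spikeMeasure_zero (by norm_num) (by norm_num) τ hτ⟩
  set p := (ρ : Measure Bool).real {false}
  have hmass (n : ℕ) :
      (Measure.pi fun _ : Fin n => (ρ : Measure Bool)).real {fun _ => false} = p ^ n := by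
    simp [measureReal_def, p, ENNReal.toReal_pow]
  by_cases hp : p = 1
  · refine ⟨⟨Measure.dirac false, inferInstance⟩, isChaotic_bind_flipKernel_dirac_false ?_⟩
    simp [hmass, hp]
  · refine ⟨⟨Measure.dirac true, inferInstance⟩, isChaotic_bind_flipKernel_dirac_true ?_⟩
    simp_rw [hmass]
    exact tendsto_pow_atTop_nhds_zero_of_lt_one measureReal_nonneg
      (measureReal_le_one.lt_of_ne hp)
end
end
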